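/- Let C be a ℚ-linear monoidal category (monoidal, preadditive, with ℚ-module Hom groups, such that tensor product of morphisms is ℚ-bilinear, i.e. MonoidalPreadditive and MonoidalLinear over ℚ). Let X and Y be objects, let m : X ⊗ X → X be a morphism, let k be a nonzero rational number, and let f : X → Y and g : Y → X be morphisms with f ∘ g = k • 𝟙_Y. Let π : ℤ → End(X) be a family of endomorphisms of X such that each π_i commutes with g ∘ f, and such that π_c ∘ m ∘ (π_a ⊗ π_b) = 0 whenever c ≠ a + b. Define m_Y := f ∘ m ∘ (g ⊗ g) : Y ⊗ Y → Y and q_i := k⁻¹ • (f ∘ π_i ∘ g) ∈ End(Y). Then q_c ∘ m_Y ∘ (q_a ⊗ q_b) = 0 whenever c ≠ a + b. -/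

import Mathlib

open CategoryTheory CategoryTheory.MonoidalCategory

/-!
Write `e = f ≫ g`. Since `g ≫ f = k • 𝟙 Y`, we have `(g ≫ p ≫ f) ≫ g = g ≫ e ≫ p = k • (g ≫ p)`
and `f ≫ (g ≫ p ≫ f) = p ≫ e ≫ f = k • (p ≫ f)` for every `p` commuting with `e`. Hence the
conjugated triple product is a scalar multiple of `(g ⊗ g) ≫ ((π a ⊗ π b) ≫ m ≫ π c) ≫ f`,
which vanishes for `c ≠ a + b`.
-/

section

variable {R : Type*} [Semiring R] {C : Type*} [Category C] [Preadditive C] [Linear R C]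
  {X Y : C} {f : X ⟶ Y} {g : Y ⟶ X} {k : R} {p : X ⟶ X}

theorem conj_comp_of_comp_eq_smul (hfg : g ≫ f = k • 𝟙 Y) (hp : (f ≫ g) ≫ p = p ≫ (f ≫ g)) :
    (g ≫ p ≫ f) ≫ g = k • (g ≫ p) := by
  simp only [Category.assoc, ← hp, reassoc_of% hfg, Linear.smul_comp, Category.id_comp]

theorem comp_conj_of_comp_eq_smul (hfg : g ≫ f = k • 𝟙 Y) (hp : (f ≫ g) ≫ p = p ≫ (f ≫ g)) :
    f ≫ (g ≫ p ≫ f) = k • (p ≫ f) := by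
  simp only [reassoc_of% hp, hfg, Linear.comp_smul, Category.comp_id]

end

section

variable {R : Type*} [CommSemiring R] {C : Type*} [Category C] [MonoidalCategory C] [Preadditive C]
  [Linear R C] [MonoidalPreadditive C] [MonoidalLinear R C]

theorem smul_tensorHom_smul {A B A' B' : C} (r s : R) (u : A ⟶ B) (v : A' ⟶ B') :
    (r • u) ⊗ₘ (s • v) = (r * s) • (u ⊗ₘ v) := by
  simp only [MonoidalCategory.tensorHom_def, MonoidalLinear.smul_whiskerRight,
    MonoidalLinear.whiskerLeft_smul, Linear.smul_comp, Linear.comp_smul, smul_smul, mul_comm]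

variable {X Y : C} {f : X ⟶ Y} {g : Y ⟶ X} {k : R}

theorem conj_tensorHom_conj_comp_comp_conj_eq_smul (m : X ⊗ X ⟶ X) (hfg : g ≫ f = k • 𝟙 Y)
    {pa pb pc : X ⟶ X} (ha : (f ≫ g) ≫ pa = pa ≫ (f ≫ g)) (hb : (f ≫ g) ≫ pb = pb ≫ (f ≫ g))
    (hc : (f ≫ g) ≫ pc = pc ≫ (f ≫ g)) :
    ((g ≫ pa ≫ f) ⊗ₘ (g ≫ pb ≫ f)) ≫ ((g ⊗ₘ g) ≫ m ≫ f) ≫ (g ≫ pc ≫ f) =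
      (k * k * k) • ((g ⊗ₘ g) ≫ ((pa ⊗ₘ pb) ≫ m ≫ pc) ≫ f) := by
  calc ((g ≫ pa ≫ f) ⊗ₘ (g ≫ pb ≫ f)) ≫ ((g ⊗ₘ g) ≫ m ≫ f) ≫ (g ≫ pc ≫ f)
      = (((g ≫ pa ≫ f) ≫ g) ⊗ₘ ((g ≫ pb ≫ f) ≫ g)) ≫ m ≫ f ≫ (g ≫ pc ≫ f) := by
        simp only [Category.assoc, tensorHom_comp_tensorHom_assoc]
    _ = ((k • (g ≫ pa)) ⊗ₘ (k • (g ≫ pb))) ≫ m ≫ (k • (pc ≫ f)) := by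
        rw [conj_comp_of_comp_eq_smul hfg ha, conj_comp_of_comp_eq_smul hfg hb,
          comp_conj_of_comp_eq_smul hfg hc]
    _ = (k * k * k) • ((g ⊗ₘ g) ≫ ((pa ⊗ₘ pb) ≫ m ≫ pc) ≫ f) := by
        simp only [smul_tensorHom_smul, Linear.smul_comp, Linear.comp_smul, smul_smul,
          ← mul_assoc, Category.assoc, tensorHom_comp_tensorHom_assoc]

end

theorem conjugate_multiplicative_projectors_general {C : Type*} [Category C]
    [MonoidalCategory C] [Preadditive C] [Linear ℚ C] [MonoidalPreadditive C]
    [MonoidalLinear ℚ C] {X Y : C} (m : X ⊗ X ⟶ X) (k : ℚ)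
    (f : X ⟶ Y) (g : Y ⟶ X) (hfg : g ≫ f = k • 𝟙 Y)
    (π : ℤ → (X ⟶ X))
    (hcomm : ∀ i, (f ≫ g) ≫ π i = π i ≫ (f ≫ g))
    (hmul : ∀ a b c : ℤ, c ≠ a + b → (π a ⊗ₘ π b) ≫ m ≫ π c = 0) :
    ∀ a b c : ℤ, c ≠ a + b →
      ((k⁻¹ • (g ≫ π a ≫ f)) ⊗ₘ (k⁻¹ • (g ≫ π b ≫ f))) ≫
        ((g ⊗ₘ g) ≫ m ≫ f) ≫ (k⁻¹ • (g ≫ π c ≫ f)) = 0 := by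
  intro a b c hne
  rw [smul_tensorHom_smul, Linear.smul_comp, Linear.comp_smul, Linear.comp_smul,
    conj_tensorHom_conj_comp_comp_conj_eq_smul m hfg (hcomm a) (hcomm b) (hcomm c), hmul a b c hne]
  simp only [Limits.zero_comp, Limits.comp_zero, smul_zero]

/-- Multiplicativity of a family of projectors descends through a "degree `k`
quotient": if `π : ℤ → End X` satisfies `π c ∘ m ∘ (π a ⊗ π b) = 0` for `c ≠ a + b`,
each `π i` commutes with `g ∘ f`, and `f ∘ g = k • 𝟙 Y` with `k ≠ 0`, then the
conjugated projectors `q i = k⁻¹ • (f ∘ π i ∘ g)` satisfy the same multiplicativity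
relation with respect to `m_Y = f ∘ m ∘ (g ⊗ g)`. -/
theorem conjugate_multiplicative_projectors {C : Type*} [Category C]
    [MonoidalCategory C] [Preadditive C] [Linear ℚ C] [MonoidalPreadditive C]
    [MonoidalLinear ℚ C] {X Y : C} (m : X ⊗ X ⟶ X) (k : ℚ) (hk : k ≠ 0)
    (f : X ⟶ Y) (g : Y ⟶ X) (hfg : g ≫ f = k • 𝟙 Y)
    (π : ℤ → (X ⟶ X))
    (hcomm : ∀ i, (f ≫ g) ≫ π i = π i ≫ (f ≫ g))
    (hmul : ∀ a b c : ℤ, c ≠ a + b → (π a ⊗ₘ π b) ≫ m ≫ π c = 0) :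
    ∀ a b c : ℤ, c ≠ a + b →
      ((k⁻¹ • (g ≫ π a ≫ f)) ⊗ₘ (k⁻¹ • (g ≫ π b ≫ f))) ≫
        ((g ⊗ₘ g) ≫ m ≫ f) ≫ (k⁻¹ • (g ≫ π c ≫ f)) = 0 :=
  conjugate_multiplicative_projectors_general m k f g hfg π hcomm hmul
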